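/- arXiv:1001.1980 — 6 statements merged into one kernel-verified Lean document; each statement's English description precedes it below -/
import Mathlib

section
/- (Balog–Szemerédi–Gowers theorem, with exponent 5.) There exist absolute constants c > 0 and C such that the following holds. Let X and Y be finite subsets of an abelian group with |X| = |Y| = n, and let α ∈ (0, 1). Suppose there is a set G ⊆ X × Y of at least α·n² pairs such that the sums {x + y : (x, y) ∈ G} take at most n distinct values. Then there exist subsets X' ⊆ X and Y' ⊆ Y with |X'| ≥ c·α·n and |Y'| ≥ c·α·n such that |X' + Y'| ≤ C · α^(−5) · n. -/
/-!
View `S` as a bipartite graph between `X` and `Y`. After discarding the vertices of `X` of degree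
below `αn/2`, Cauchy–Schwarz over the neighbourhoods `N(y)` yields a `y₀` whose neighbourhood `U`
has size `≳ αn` and contains few pairs with small codegree. Keeping the `x ∈ U` that lie in few
such pairs gives `X'`, and `Y'` consists of the `y` adjacent to a fixed fraction of `X'`. Then any
`x ∈ X'` and `y ∈ Y'` are joined by `≫ α⁵n²` paths `x – y₁ – x₁ – y`, and each path writes
`x + y = (x + y₁) - (x₁ + y₁) + (x₁ + y)` as `a - b + c` with `a, b, c` in the set `A` of sums
along `S`, injectively. Hence `|X' + Y'| · α⁵n² ≪ |A|³ ≤ n³`.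
-/

open Finset Pointwise

section Markov

variable {ι : Type*} (s : Finset ι) (f : ι → ℝ) {t : ℝ}

lemma card_filter_le_mul_le_sum (hf : ∀ i ∈ s, 0 ≤ f i) :
    #{i ∈ s | t ≤ f i} * t ≤ ∑ i ∈ s, f i :=
  calc (#{i ∈ s | t ≤ f i} : ℝ) * t ≤ ∑ i ∈ s with t ≤ f i, f i := by
        simpa using card_nsmul_le_sum _ f t fun i hi => (mem_filter.1 hi).2
    _ ≤ ∑ i ∈ s, f i :=
        sum_le_sum_of_subset_of_nonneg (filter_subset _ _) fun i hi _ => hf i hi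

lemma card_sub_sum_div_le_card_filter_lt (hf : ∀ i ∈ s, 0 ≤ f i) (ht : 0 < t) :
    #s - (∑ i ∈ s, f i) / t ≤ #{i ∈ s | f i < t} := by
  have hsplit := card_filter_add_card_filter_not (s := s) (p := fun i => f i < t)
  have hmarkov : (#{i ∈ s | ¬ f i < t} : ℝ) ≤ (∑ i ∈ s, f i) / t := by
    rw [le_div_iff₀ ht]
    simpa only [not_lt] using card_filter_le_mul_le_sum s f hf
  have : (#{i ∈ s | f i < t} : ℝ) + #{i ∈ s | ¬ f i < t} = #s := by exact_mod_cast hsplit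
  linarith

lemma sum_sub_card_mul_le_sum_filter_le (ht : 0 ≤ t) :
    ∑ i ∈ s, f i - #s * t ≤ ∑ i ∈ s with t ≤ f i, f i := by
  have hsmall : ∑ i ∈ s with ¬ t ≤ f i, f i ≤ #s * t :=
    calc ∑ i ∈ s with ¬ t ≤ f i, f i ≤ #{i ∈ s | ¬ t ≤ f i} * t := by
          simpa using sum_le_card_nsmul _ f t fun i hi => (not_le.1 (mem_filter.1 hi).2).le
      _ ≤ #s * t := by gcongr; exact filter_subset _ _
  linarith [sum_filter_add_sum_filter_not s (fun i => t ≤ f i) f]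

end Markov

section BipartiteGraph

variable {α β : Type*} (r : α → β → Prop) [∀ a b, Decidable (r a b)]

def codegree (Y : Finset β) (a a' : α) : ℕ := #{b ∈ Y | r a b ∧ r a' b}

noncomputable def sparseDegree (Y : Finset β) (τ : ℝ) (U : Finset α) (a : α) : ℕ :=
  #{a' ∈ U | (codegree r Y a a' : ℝ) < τ}

/-- `⟨a', b'⟩` stands for the path `a – b' – a' – b`. -/
def threePaths (X : Finset α) (Y : Finset β) (a : α) (b : β) : Finset (Σ _ : α, β) :=
  (X.bipartiteBelow r b).sigma fun a' => {b' ∈ Y | r a b' ∧ r a' b'}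

variable {r}

lemma half_mul_sq_le_sum_card_bipartiteAbove_filter {X : Finset α} {Y : Finset β} {δ n : ℝ}
    (hδ : 0 ≤ δ) (hX : #X ≤ n) (he : δ * n ^ 2 ≤ ∑ a ∈ X, #(Y.bipartiteAbove r a)) :
    δ / 2 * n ^ 2 ≤ ∑ a ∈ X with δ * n / 2 ≤ #(Y.bipartiteAbove r a), #(Y.bipartiteAbove r a) := by
  have hn : 0 ≤ n := (Nat.cast_nonneg _).trans hX
  have hlow := sum_sub_card_mul_le_sum_filter_le X (fun a => (#(Y.bipartiteAbove r a) : ℝ))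
    (t := δ * n / 2) (by positivity)
  have hXn : #X * (δ * n / 2) ≤ n * (δ * n / 2) := by gcongr
  push_cast at he ⊢
  linarith

lemma sum_sum_card_filter_bipartiteBelow (X : Finset α) (Y : Finset β) (p : α → α → Prop)
    [DecidableRel p] :
    ∑ b ∈ Y, ∑ a ∈ X.bipartiteBelow r b, #{a' ∈ X.bipartiteBelow r b | p a a'} =
      ∑ a ∈ X, ∑ a' ∈ X with p a a', codegree r Y a a' := by
  simp only [codegree, card_eq_sum_ones]
  rw [sum_comm' (t' := X) (s' := fun a => Y.bipartiteAbove r a)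
    (by simp only [mem_bipartiteBelow, mem_bipartiteAbove]; tauto)]
  refine sum_congr rfl fun a _ => ?_
  rw [sum_comm' (t' := {a' ∈ X | p a a'}) (s' := fun a' => {b ∈ Y | r a b ∧ r a' b})
    (by simp only [mem_filter, mem_bipartiteBelow, mem_bipartiteAbove]; tauto)]

lemma sum_sum_sparseDegree_bipartiteBelow_le (X : Finset α) (Y : Finset β) {τ : ℝ}
    (hτ : 0 ≤ τ) :
    ∑ b ∈ Y, ∑ a ∈ X.bipartiteBelow r b, (sparseDegree r Y τ (X.bipartiteBelow r b) a : ℝ) ≤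
      #X ^ 2 * τ := by
  have hcount := sum_sum_card_filter_bipartiteBelow (r := r) X Y
    fun a a' => (codegree r Y a a' : ℝ) < τ
  have hrow : ∀ a ∈ X,
      ∑ a' ∈ X with (codegree r Y a a' : ℝ) < τ, (codegree r Y a a' : ℝ) ≤ #X * τ :=
    fun a _ => calc
      _ ≤ #{a' ∈ X | (codegree r Y a a' : ℝ) < τ} * τ := by
        simpa using sum_le_card_nsmul _ _ τ fun a' ha' => (mem_filter.1 ha').2.le
      _ ≤ #X * τ := by gcongr; exact filter_subset _ _
  simp only [sparseDegree]
  calc _ = ∑ a ∈ X, ∑ a' ∈ X with (codegree r Y a a' : ℝ) < τ, (codegree r Y a a' : ℝ) := by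
        exact_mod_cast hcount
    _ ≤ #X * (#X * τ) := by simpa using sum_le_card_nsmul _ _ _ hrow
    _ = #X ^ 2 * τ := by ring

lemma exists_large_bipartiteBelow_sum_sparseDegree_le {X : Finset α} {Y : Finset β}
    {δ n τ : ℝ} (hδ : 0 < δ) (hn : 0 < n) (hτ₀ : 0 ≤ τ) (hτ : τ ≤ δ ^ 3 * n / 32)
    (hX : #X ≤ n) (hY : #Y ≤ n) (he : δ * n ^ 2 ≤ ∑ a ∈ X, #(Y.bipartiteAbove r a)) :
    ∃ b ∈ Y, 2 * δ * n / 3 ≤ #(X.bipartiteBelow r b) ∧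
      ∑ a ∈ X.bipartiteBelow r b, (sparseDegree r Y τ (X.bipartiteBelow r b) a : ℝ) ≤
        δ * #(X.bipartiteBelow r b) ^ 2 / 16 := by
  set N : β → Finset α := fun b => X.bipartiteBelow r b
  set sp : β → ℝ := fun b => ∑ a ∈ N b, (sparseDegree r Y τ (N b) a : ℝ)
  push_cast at he
  have hedges : ∑ a ∈ X, (#(Y.bipartiteAbove r a) : ℝ) = ∑ b ∈ Y, (#(N b) : ℝ) := by
    exact_mod_cast sum_card_bipartiteAbove_eq_sum_card_bipartiteBelow r
  have hsq : δ ^ 2 * n ^ 3 ≤ ∑ b ∈ Y, (#(N b) : ℝ) ^ 2 := by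
    have hCS : (δ * n ^ 2) ^ 2 ≤ n * ∑ b ∈ Y, (#(N b) : ℝ) ^ 2 :=
      calc (δ * n ^ 2) ^ 2 ≤ (∑ b ∈ Y, (#(N b) : ℝ)) ^ 2 := by
            rw [← hedges]; gcongr
        _ ≤ #Y * ∑ b ∈ Y, (#(N b) : ℝ) ^ 2 := sq_sum_le_card_mul_sum_sq
        _ ≤ n * ∑ b ∈ Y, (#(N b) : ℝ) ^ 2 :=
            mul_le_mul_of_nonneg_right hY (sum_nonneg fun _ _ => sq_nonneg _)
    nlinarith
  have hsparse : ∑ b ∈ Y, sp b ≤ δ ^ 3 * n ^ 3 / 32 :=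
    calc ∑ b ∈ Y, sp b ≤ #X ^ 2 * τ := sum_sum_sparseDegree_bipartiteBelow_le X Y hτ₀
      _ ≤ n ^ 2 * (δ ^ 3 * n / 32) := by gcongr
      _ = δ ^ 3 * n ^ 3 / 32 := by ring
  have hYne : Y.Nonempty := by
    refine nonempty_iff_ne_empty.2 fun hY₀ => ?_
    have := he.trans_eq hedges
    rw [hY₀, sum_empty] at this
    nlinarith [mul_pos hδ (pow_pos hn 2)]
  -- Averaging `δ |N b|² - 16 sp b` gives a single `b` with a large neighbourhood containing
  -- few sparse pairs.
  obtain ⟨b, hb, hgood⟩ := exists_le_of_sum_le hYne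
    (f := fun _ => δ ^ 3 * n ^ 2 / 2) (g := fun b => δ * #(N b) ^ 2 - 16 * sp b) <|
    calc ∑ _b ∈ Y, δ ^ 3 * n ^ 2 / 2 = #Y * (δ ^ 3 * n ^ 2 / 2) := by simp
      _ ≤ n * (δ ^ 3 * n ^ 2 / 2) := by gcongr
      _ ≤ δ * ∑ b ∈ Y, (#(N b) : ℝ) ^ 2 - 16 * ∑ b ∈ Y, sp b := by nlinarith
      _ = ∑ b ∈ Y, (δ * #(N b) ^ 2 - 16 * sp b) := by rw [sum_sub_distrib, mul_sum, mul_sum]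
  have hsp : 0 ≤ sp b := sum_nonneg fun _ _ => Nat.cast_nonneg _
  refine ⟨b, hb, ?_, show sp b ≤ δ * #(N b) ^ 2 / 16 by
    linarith [show 0 ≤ δ ^ 3 * n ^ 2 / 2 by positivity]⟩
  have hu : δ * (δ ^ 2 * n ^ 2 / 2) ≤ δ * (#(N b) : ℝ) ^ 2 := by linarith
  have hu' := le_of_mul_le_mul_left hu hδ
  by_contra! hlt
  nlinarith [pow_lt_pow_left₀ hlt (Nat.cast_nonneg _) two_ne_zero, mul_pos hδ hn]

lemma sub_mul_le_card_filter_le_card_bipartiteBelow {A : Finset α} {Y : Finset β} {d n θ : ℝ}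
    (hA : A.Nonempty) (hθ : 0 ≤ θ) (hY : #Y ≤ n) (hd : ∀ a ∈ A, d ≤ #(Y.bipartiteAbove r a)) :
    d - n * θ ≤ #{b ∈ Y | θ * #A ≤ #(A.bipartiteBelow r b)} := by
  set f : β → ℝ := fun b => #(A.bipartiteBelow r b)
  have hedges : #A * d ≤ ∑ b ∈ Y, f b :=
    calc #A * d ≤ ∑ a ∈ A, (#(Y.bipartiteAbove r a) : ℝ) := by
          simpa using card_nsmul_le_sum A _ d hd
      _ = ∑ b ∈ Y, f b := by
          simp only [f]; exact_mod_cast sum_card_bipartiteAbove_eq_sum_card_bipartiteBelow r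
  have hrich : ∑ b ∈ Y with θ * #A ≤ f b, f b ≤ #{b ∈ Y | θ * #A ≤ f b} * #A := by
    simpa using sum_le_card_nsmul _ f #A fun b _ => by
      simp only [f]; exact_mod_cast card_le_card (filter_subset _ A)
  have hpoor := sum_sub_card_mul_le_sum_filter_le Y f (t := θ * #A) (by positivity)
  have hYθ : #Y * (θ * #A) ≤ n * (θ * #A) := by gcongr
  have hApos : (0 : ℝ) < #A := by exact_mod_cast hA.card_pos
  refine le_of_mul_le_mul_left ?_ hApos
  linarith

lemma card_sub_sparseDegree_mul_le_card_threePaths {U X : Finset α} {Y : Finset β} {τ : ℝ}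
    (hτ : 0 ≤ τ) (hUX : U ⊆ X) (a : α) (b : β) :
    ((#(U.bipartiteBelow r b) : ℝ) - sparseDegree r Y τ U a) * τ ≤ #(threePaths r X Y a b) := by
  set good := {a' ∈ X.bipartiteBelow r b | τ ≤ codegree r Y a a'}
  have hcover : #(U.bipartiteBelow r b) ≤ #good + sparseDegree r Y τ U a := by
    rw [← card_filter_add_card_filter_not (fun a' => τ ≤ (codegree r Y a a' : ℝ))]
    refine add_le_add (card_le_card fun a' ha' => ?_) (card_le_card fun a' ha' => ?_) <;>
      simp only [good, mem_filter, mem_bipartiteBelow, not_le] at ha' ⊢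
    · exact ⟨⟨hUX ha'.1.1, ha'.1.2⟩, ha'.2⟩
    · exact ⟨ha'.1.1, ha'.2⟩
  have hpaths : #good * τ ≤ #(threePaths r X Y a b) := by
    rw [threePaths, card_sigma, Nat.cast_sum]
    exact card_filter_le_mul_le_sum _ (fun a' => (codegree r Y a a' : ℝ))
      fun _ _ => Nat.cast_nonneg _
  have hcover' : (#(U.bipartiteBelow r b) : ℝ) - sparseDegree r Y τ U a ≤ #good := by
    have : (#(U.bipartiteBelow r b) : ℝ) ≤ #good + sparseDegree r Y τ U a := by
      exact_mod_cast hcover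
    linarith
  exact (mul_le_mul_of_nonneg_right hcover' hτ).trans hpaths

lemma exists_large_subsets_forall_le_card_threePaths {X : Finset α} {Y : Finset β} {δ n : ℝ}
    (hδ : 0 < δ) (hn : 0 < n) (hX : #X ≤ n) (hY : #Y ≤ n)
    (he : δ * n ^ 2 ≤ ∑ a ∈ X, #(Y.bipartiteAbove r a)) :
    ∃ X' ⊆ X, ∃ Y' ⊆ Y, δ * n / 6 ≤ #X' ∧ δ * n / 4 ≤ #Y' ∧
      ∀ a ∈ X', ∀ b ∈ Y', δ ^ 5 * n ^ 2 / 12288 ≤ #(threePaths r X Y a b) := by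
  set X₁ := {a ∈ X | δ * n / 2 ≤ #(Y.bipartiteAbove r a)}
  have hX₁ : X₁ ⊆ X := filter_subset _ _
  have he₁ := half_mul_sq_le_sum_card_bipartiteAbove_filter hδ.le hX he
  set τ := δ ^ 3 * n / 256
  have hτ : τ ≤ (δ / 2) ^ 3 * n / 32 := le_of_eq (by simp only [τ]; ring)
  have hX₁n : (#X₁ : ℝ) ≤ n := le_trans (by exact_mod_cast card_le_card hX₁) hX
  obtain ⟨b₀, -, hU, hUsparse⟩ := exists_large_bipartiteBelow_sum_sparseDegree_le (r := r)
    (half_pos hδ) hn (by positivity) hτ hX₁n hY he₁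
  set U := X₁.bipartiteBelow r b₀
  have hUX₁ : U ⊆ X₁ := filter_subset _ _
  have hUpos : (0 : ℝ) < #U := lt_of_lt_of_le (by positivity) hU
  set X' := {a ∈ U | (sparseDegree r Y τ U a : ℝ) < δ * #U / 16}
  have hX'U : X' ⊆ U := filter_subset _ _
  have hX' : #U / 2 ≤ (#X' : ℝ) := by
    have hmarkov := card_sub_sum_div_le_card_filter_lt U (fun a => (sparseDegree r Y τ U a : ℝ))
      (fun _ _ => Nat.cast_nonneg _) (t := δ * #U / 16) (by positivity)
    have hratio : (∑ a ∈ U, (sparseDegree r Y τ U a : ℝ)) / (δ * #U / 16) ≤ #U / 2 := by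
      rw [div_le_iff₀ (by positivity)]
      linarith
    linarith
  have hX'ne : X'.Nonempty := by
    rw [← card_pos]; exact_mod_cast (by linarith : (0 : ℝ) < #X')
  set Y' := {b ∈ Y | δ / 4 * #X' ≤ #(X'.bipartiteBelow r b)}
  have hY' : δ * n / 4 ≤ #Y' := by
    have := sub_mul_le_card_filter_le_card_bipartiteBelow (r := r) (d := δ * n / 2) (θ := δ / 4)
      hX'ne (by positivity) hY fun a ha => (mem_filter.1 (hUX₁ (hX'U ha))).2
    linarith
  refine ⟨X', hX'U.trans (hUX₁.trans hX₁), Y', filter_subset _ _, by linarith, hY',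
    fun a ha b hb => ?_⟩
  have hpaths := card_sub_sparseDegree_mul_le_card_threePaths (r := r) (Y := Y)
    (by positivity : 0 ≤ τ) (hUX₁.trans hX₁) a b
  have hb' : δ / 4 * #X' ≤ (#(U.bipartiteBelow r b) : ℝ) :=
    (mem_filter.1 hb).2.trans (by exact_mod_cast card_le_card (filter_subset_filter _ hX'U))
  have ha' : (sparseDegree r Y τ U a : ℝ) < δ * #U / 16 := (mem_filter.1 ha).2
  calc δ ^ 5 * n ^ 2 / 12288 = δ ^ 2 * n / 48 * τ := by ring
    _ ≤ (#(U.bipartiteBelow r b) - sparseDegree r Y τ U a) * τ := by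
        gcongr
        nlinarith
    _ ≤ _ := hpaths

end BipartiteGraph

lemma card_eq_sum_card_bipartiteAbove_of_subset_product {α β : Type*} [DecidableEq α]
    [DecidableEq β] {S : Finset (α × β)} {X : Finset α} {Y : Finset β} (h : S ⊆ X ×ˢ Y) :
    #S = ∑ a ∈ X, #(Y.bipartiteAbove (fun a b => (a, b) ∈ S) a) := by
  calc #S = #{p ∈ X ×ˢ Y | p ∈ S} := by rw [filter_mem_eq_inter, inter_eq_right.2 h]
    _ = _ := by simp only [card_filter, sum_product, bipartiteAbove]

section Additive

variable {G : Type*} [AddCommGroup G] [DecidableEq G]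

def diffSumReprs (A : Finset G) (s : G) : Finset (G × G × G) :=
  {t ∈ A ×ˢ A ×ˢ A | t.1 - t.2.1 + t.2.2 = s}

lemma card_mul_le_card_pow_three_of_le_card_diffSumReprs {A P : Finset G} {m : ℝ}
    (h : ∀ s ∈ P, m ≤ #(diffSumReprs A s)) : #P * m ≤ #A ^ 3 :=
  calc #P * m ≤ ∑ s ∈ P, (#(diffSumReprs A s) : ℝ) := by simpa using card_nsmul_le_sum P _ m h
    _ ≤ #(A ×ˢ A ×ˢ A) := by
      exact_mod_cast (sum_card_fiberwise_eq_card_filter _ P _).trans_le (card_filter_le _ _)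
    _ = #A ^ 3 := by simp only [card_product]; push_cast; ring

lemma card_threePaths_le_card_diffSumReprs (S : Finset (G × G)) (X Y : Finset G) (x y : G) :
    #(threePaths (fun a b => (a, b) ∈ S) X Y x y) ≤
      #(diffSumReprs (S.image fun q => q.1 + q.2) (x + y)) := by
  refine card_le_card_of_injOn (fun p => (x + p.2, p.1 + p.2, p.1 + y)) (fun p hp => ?_) ?_
  · simp only [threePaths, coe_sigma, Set.mem_sigma_iff, mem_coe, mem_bipartiteBelow,
      mem_filter] at hp
    simp only [diffSumReprs, coe_filter, Set.mem_ofPred_eq, mem_product, mem_image]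
    exact ⟨⟨⟨_, hp.2.2.1, rfl⟩, ⟨_, hp.2.2.2, rfl⟩, ⟨_, hp.1.2, rfl⟩⟩, by abel⟩
  · rintro ⟨x₁, y₁⟩ - ⟨x₂, y₂⟩ - h
    simp only [Prod.mk.injEq, add_right_inj, add_left_inj] at h
    obtain ⟨rfl, -, rfl⟩ := h
    rfl

end Additive

theorem stmt_3 :
    ∃ c : ℝ, 0 < c ∧ ∃ C : ℝ, ∀ (G : Type*) [AddCommGroup G] [DecidableEq G]
      (X Y : Finset G) (n : ℕ) (α : ℝ), X.card = n → Y.card = n →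
      α ∈ Set.Ioo (0 : ℝ) 1 →
      ∀ S : Finset (G × G), S ⊆ X ×ˢ Y → α * (n : ℝ) ^ 2 ≤ (S.card : ℝ) →
        (S.image fun q => q.1 + q.2).card ≤ n →
        ∃ X' ⊆ X, ∃ Y' ⊆ Y,
          c * α * n ≤ (X'.card : ℝ) ∧ c * α * n ≤ (Y'.card : ℝ) ∧
          ((X' + Y').card : ℝ) ≤ C * α ^ (-5 : ℤ) * n := by
  refine ⟨1 / 6, by norm_num, 12288, fun G _ _ X Y n α hX hY hα S hSXY hS hA => ?_⟩
  rcases Nat.eq_zero_or_pos n with rfl | hn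
  · exact ⟨∅, empty_subset X, ∅, empty_subset Y, by simp⟩
  have hn' : (0 : ℝ) < n := by exact_mod_cast hn
  obtain ⟨X', hX'X, Y', hY'Y, hX', hY', hpaths⟩ :=
    exists_large_subsets_forall_le_card_threePaths hα.1 hn' (by exact_mod_cast hX.le)
      (by exact_mod_cast hY.le)
      (card_eq_sum_card_bipartiteAbove_of_subset_product hSXY ▸ hS)
  refine ⟨X', hX'X, Y', hY'Y, by linarith, by linarith, ?_⟩
  have hsum := card_mul_le_card_pow_three_of_le_card_diffSumReprs (P := X' + Y') fun s hs => by
    obtain ⟨x, hx, y, hy, rfl⟩ := mem_add.1 hs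
    exact (hpaths x hx y hy).trans
      (by exact_mod_cast card_threePaths_le_card_diffSumReprs S X Y x y)
  have hA3 : (#(S.image fun q => q.1 + q.2) : ℝ) ^ 3 ≤ n ^ 3 :=
    pow_le_pow_left₀ (Nat.cast_nonneg _) (by exact_mod_cast hA) 3
  rw [zpow_neg, zpow_ofNat, show 12288 * (α ^ 5)⁻¹ * n = n ^ 3 / (α ^ 5 * n ^ 2 / 12288) by
    field_simp, le_div_iff₀ (by have := hα.1; positivity)]
  linarith
end

section
/- Let Y, X₁, …, X_k be finite nonempty subsets of an abelian group. Then |X₁ + X₂ + ⋯ + X_k| ≤ ∏_{i=1}^k |Y + X_i| / |Y|^(k−1). -/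
open Pointwise Finset

namespace PRAux

variable {H : Type*} [AddCommGroup H] [DecidableEq H]

/-- Pointwise sum of finsets is monotone w.r.t. `⊆` in each summand. -/
theorem sum_finset_subset {ι : Type*} (s : Finset ι) (f g : ι → Finset H)
    (h : ∀ i ∈ s, f i ⊆ g i) : (∑ i ∈ s, f i) ⊆ ∑ i ∈ s, g i := by
  classical
  induction s using Finset.cons_induction with
  | empty => simp
  | cons i s hi ih =>
      rw [Finset.sum_cons, Finset.sum_cons]
      exact Finset.add_subset_add (h i (Finset.mem_cons_self i s))
        (ih fun j hj => h j (Finset.mem_cons_of_mem hj))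

theorem add_biUnion' (A : Finset H) {ι : Type*} (s : Finset ι) (f : ι → Finset H) :
    A + s.biUnion f = s.biUnion fun i => A + f i := by
  ext x
  simp only [Finset.mem_add, Finset.mem_biUnion]
  constructor
  · rintro ⟨y, hy, z, ⟨i, hi, hz⟩, hxyz⟩
    exact ⟨i, hi, y, hy, z, hz, hxyz⟩
  · rintro ⟨i, hi, y, hy, z, hz, hxyz⟩
    exact ⟨y, hy, z, ⟨i, hi, hz⟩, hxyz⟩

/-- Core inequality: `|B₁ + ⋯ + B_k| ≤ ((Σᵢ |A+Bᵢ|)/|A|)^k |A|`, obtained by applying the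
single-summand Plünnecke–Ruzsa inequality to the union of the `Bᵢ`. -/
theorem core (k : ℕ) (A : Finset H) (hA : A.Nonempty) (B : Fin k → Finset H) :
    ((∑ i, B i).card : ℚ≥0)
      ≤ ((∑ i, ((A + B i).card : ℚ≥0)) / (A.card : ℚ≥0)) ^ k * (A.card : ℚ≥0) := by
  classical
  set U : Finset H := Finset.univ.biUnion B with hU
  have hsub : (∑ i, B i) ⊆ k • U := by
    have h1 : (∑ i, B i) ⊆ ∑ _i : Fin k, U :=
      sum_finset_subset _ _ _ fun i _ => Finset.subset_biUnion_of_mem B (Finset.mem_univ i)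
    simpa [Finset.sum_const, Finset.card_univ] using h1
  have h2 : (((∑ i, B i).card : ℕ) : ℚ≥0) ≤ ((k • U).card : ℕ) := by
    exact_mod_cast Finset.card_le_card hsub
  have h3 := Finset.pluennecke_ruzsa_inequality_nsmul_add hA U k
  have h4 : ((A + U).card : ℚ≥0) ≤ ∑ i, ((A + B i).card : ℚ≥0) := by
    rw [hU, add_biUnion']
    exact_mod_cast Finset.card_biUnion_le
  have hA0 : (0 : ℚ≥0) < (A.card : ℚ≥0) := by exact_mod_cast hA.card_pos
  refine h2.trans (h3.trans ?_)
  gcongr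

theorem product_add_product {H' : Type*} [AddCommGroup H'] [DecidableEq H']
    (s u : Finset H) (t v : Finset H') :
    (s ×ˢ t) + (u ×ˢ v) = (s + u) ×ˢ (t + v) := by
  ext ⟨x, y⟩
  simp only [Finset.mem_add, Finset.mem_product]
  constructor
  · rintro ⟨⟨p1, p2⟩, ⟨hp1, hp2⟩, ⟨q1, q2⟩, ⟨hq1, hq2⟩, h⟩
    rw [Prod.mk_add_mk] at h
    cases h
    exact ⟨⟨p1, hp1, q1, hq1, rfl⟩, ⟨p2, hp2, q2, hq2, rfl⟩⟩
  · rintro ⟨⟨p1, hp1, q1, hq1, h1⟩, ⟨p2, hp2, q2, hq2, h2⟩⟩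
    exact ⟨(p1, p2), ⟨hp1, hp2⟩, (q1, q2), ⟨hq1, hq2⟩, by rw [Prod.mk_add_mk, h1, h2]⟩

set_option linter.unusedSectionVars false in
theorem zero_product_zero {H' : Type*} [AddCommGroup H'] [DecidableEq H'] :
    ((0 : Finset H) ×ˢ (0 : Finset H')) = (0 : Finset (H × H')) := by
  ext ⟨x, y⟩
  simp [Finset.mem_product, Finset.mem_zero, Prod.ext_iff]

theorem sum_product_pointwise {H' : Type*} [AddCommGroup H'] [DecidableEq H']
    {ι : Type*} (s : Finset ι) (f : ι → Finset H) (g : ι → Finset H') :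
    ∑ i ∈ s, (f i ×ˢ g i) = (∑ i ∈ s, f i) ×ˢ (∑ i ∈ s, g i) := by
  classical
  induction s using Finset.cons_induction with
  | empty => simp [zero_product_zero]
  | cons i s hi ih =>
      rw [Finset.sum_cons, Finset.sum_cons, Finset.sum_cons, ih, product_add_product]

theorem piFinset_sum_comm {κ : Type*} [Fintype κ] [DecidableEq κ]
    {ι : Type*} (s : Finset ι) (f : ι → κ → Finset H) :
    ∑ i ∈ s, Fintype.piFinset (f i) = Fintype.piFinset (fun j => ∑ i ∈ s, f i j) := by
  classical
  induction s using Finset.cons_induction with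
  | empty =>
      simp only [Finset.sum_empty]
      ext x
      simp [Fintype.mem_piFinset, Finset.mem_zero, funext_iff]
  | cons i s hi ih =>
      simp only [Finset.sum_cons]
      rw [ih, ← Fintype.piFinset_add]

theorem le_of_pow_le_const_mul_pow {x y D : ℕ} (hy : 0 < y)
    (h : ∀ m : ℕ, x ^ m ≤ D * y ^ m) : x ≤ y := by
  by_contra hxy
  push_neg at hxy
  have hy' : (0 : ℝ) < (y : ℝ) := by exact_mod_cast hy
  have h1 : (1 : ℝ) < (x : ℝ) / (y : ℝ) := (one_lt_div hy').2 (by exact_mod_cast hxy)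
  obtain ⟨n, hn⟩ := pow_unbounded_of_one_lt (D : ℝ) h1
  have h2 : (x : ℝ) ^ n ≤ (D : ℝ) * (y : ℝ) ^ n := by exact_mod_cast h n
  rw [div_pow, lt_div_iff₀ (by positivity)] at hn
  nlinarith [pow_pos hy' n]

/-- The tensor-power/box construction step. -/
theorem construction {G : Type*} [AddCommGroup G] [DecidableEq G] (k m : ℕ)
    (A : Finset G) (hA : A.Nonempty) (B : Fin k → Finset G) (t : Fin k → ℕ)
    (hat : ∀ i, (A + B i).card ^ m * t i = (∏ j, (A + B j).card) ^ m) :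
    (∑ i, B i).card ^ m * (∏ j, t j) * (A.card ^ m) ^ k
      ≤ (k * (∏ j, (A + B j).card) ^ m) ^ k * A.card ^ m := by
  classical
  -- the boxes
  have cardJ : ∀ i : Fin k,
      (Fintype.piFinset fun j : Fin k =>
        if j = i then Finset.Icc (0 : ℤ) ((t i : ℤ) - 1) else 0).card = t i := by
    intro i
    rw [Fintype.card_piFinset]
    have h : ∀ j : Fin k,
        ((if j = i then Finset.Icc (0 : ℤ) ((t i : ℤ) - 1) else 0) : Finset ℤ).card
          = if j = i then t i else 1 := by
      intro j
      split
      · rw [Int.card_Icc]; simp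
      · rfl
    rw [Finset.prod_congr rfl fun j _ => h j, Finset.prod_ite_eq']
    simp
  have cardPF : ∀ s : Finset G,
      (Fintype.piFinset fun _ : Fin m => s).card = s.card ^ m := by
    intro s
    rw [Fintype.card_piFinset]
    simp
  have hPFA : (Fintype.piFinset fun _ : Fin m => A).Nonempty := by
    obtain ⟨a, ha⟩ := hA
    exact ⟨fun _ => a, by simp [Fintype.mem_piFinset, ha]⟩
  have hAtne : ((Fintype.piFinset fun _ : Fin m => A) ×ˢ (0 : Finset (Fin k → ℤ))).Nonempty :=
    hPFA.product ⟨0, Finset.mem_zero.2 rfl⟩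
  have hcore := core k _ hAtne (fun i =>
    (Fintype.piFinset fun _ : Fin m => B i) ×ˢ
      (Fintype.piFinset fun j : Fin k =>
        if j = i then Finset.Icc (0 : ℤ) ((t i : ℤ) - 1) else 0))
  -- identify the translated sets
  have e1 : ∀ i : Fin k,
      ((Fintype.piFinset fun _ : Fin m => A) ×ˢ (0 : Finset (Fin k → ℤ)))
        + ((Fintype.piFinset fun _ : Fin m => B i) ×ˢ
            (Fintype.piFinset fun j : Fin k =>
              if j = i then Finset.Icc (0 : ℤ) ((t i : ℤ) - 1) else 0))
      = (Fintype.piFinset fun _ : Fin m => A + B i) ×ˢ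
          (Fintype.piFinset fun j : Fin k =>
            if j = i then Finset.Icc (0 : ℤ) ((t i : ℤ) - 1) else 0) := by
    intro i
    rw [product_add_product]
    congr 1
    · rw [← Fintype.piFinset_add]
    · exact zero_add _
  have e2 : (∑ i, ((Fintype.piFinset fun _ : Fin m => B i) ×ˢ
        (Fintype.piFinset fun j : Fin k =>
          if j = i then Finset.Icc (0 : ℤ) ((t i : ℤ) - 1) else 0)))
      = (Fintype.piFinset fun _ : Fin m => ∑ i, B i) ×ˢ
          (Fintype.piFinset fun j : Fin k => Finset.Icc (0 : ℤ) ((t j : ℤ) - 1)) := by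
    rw [sum_product_pointwise]
    congr 1
    · rw [piFinset_sum_comm]
    · rw [piFinset_sum_comm]
      congr 1
      funext j
      rw [Finset.sum_ite_eq]
      simp
  rw [e2] at hcore
  -- compute the cardinalities appearing in `hcore`
  have c1 : ((Fintype.piFinset fun _ : Fin m => ∑ i, B i) ×ˢ
      (Fintype.piFinset fun j : Fin k => Finset.Icc (0 : ℤ) ((t j : ℤ) - 1))).card
      = (∑ i, B i).card ^ m * ∏ j, t j := by
    rw [Finset.card_product, cardPF, Fintype.card_piFinset]
    congr 1
    refine Finset.prod_congr rfl fun j _ => ?_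
    rw [Int.card_Icc]; simp
  have c3 : ((Fintype.piFinset fun _ : Fin m => A) ×ˢ (0 : Finset (Fin k → ℤ))).card
      = A.card ^ m := by
    rw [Finset.card_product, cardPF]
    simp
  have c2 : ∀ i : Fin k, (((Fintype.piFinset fun _ : Fin m => A) ×ˢ (0 : Finset (Fin k → ℤ)))
        + ((Fintype.piFinset fun _ : Fin m => B i) ×ˢ
            (Fintype.piFinset fun j : Fin k =>
              if j = i then Finset.Icc (0 : ℤ) ((t i : ℤ) - 1) else 0))).card
      = (∏ j, (A + B j).card) ^ m := by
    intro i
    rw [e1 i, Finset.card_product, cardPF, cardJ]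
    exact hat i
  rw [c1, c3] at hcore
  have c4 : (∑ i : Fin k, ((((Fintype.piFinset fun _ : Fin m => A) ×ˢ (0 : Finset (Fin k → ℤ)))
        + ((Fintype.piFinset fun _ : Fin m => B i) ×ˢ
            (Fintype.piFinset fun j : Fin k =>
              if j = i then Finset.Icc (0 : ℤ) ((t i : ℤ) - 1) else 0))).card : ℚ≥0))
      = ((k * (∏ j, (A + B j).card) ^ m : ℕ) : ℚ≥0) := by
    rw [Finset.sum_congr rfl fun i _ => by rw [c2 i]]
    push_cast
    simp [Finset.card_univ, mul_comm]
  rw [c4] at hcore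
  -- clear denominators
  have hApow : (0 : ℚ≥0) < ((A.card ^ m : ℕ) : ℚ≥0) := by
    have : 0 < A.card ^ m := pow_pos hA.card_pos m
    exact_mod_cast this
  rw [div_pow, div_mul_eq_mul_div] at hcore
  have hcore2 := (le_div_iff₀ (pow_pos hApow k)).mp hcore
  exact_mod_cast hcore2

theorem arith_step (S P a n m C : ℕ)
    (hcon : S ^ m * P ^ (m * n) * (a ^ m) ^ (n + 1) ≤ C * (P ^ m) ^ (n + 1) * a ^ m) :
    (S * P ^ n * a ^ (n + 1)) ^ m ≤ C * (P ^ (n + 1) * a) ^ m :=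
  calc (S * P ^ n * a ^ (n + 1)) ^ m
      = S ^ m * P ^ (m * n) * (a ^ m) ^ (n + 1) := by ring
    _ ≤ C * (P ^ m) ^ (n + 1) * a ^ m := hcon
    _ = C * (P ^ (n + 1) * a) ^ m := by ring

/-- Main lemma, natural number form: `|B₁+⋯+B_k| ⬝ |A|^(k-1) ≤ ∏ᵢ |A+Bᵢ|`. -/
theorem main_nat {G : Type*} [AddCommGroup G] [DecidableEq G] (k' : ℕ)
    (A : Finset G) (hA : A.Nonempty) (B : Fin (k' + 1) → Finset G)
    (hB : ∀ i, (B i).Nonempty) :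
    (∑ i, B i).card * A.card ^ k' ≤ ∏ i, (A + B i).card := by
  classical
  have haipos : ∀ i, 0 < (A + B i).card := fun i => (hA.add (hB i)).card_pos
  have hPpos : 0 < ∏ i, (A + B i).card := Finset.prod_pos fun i _ => haipos i
  have hApos : 0 < A.card := hA.card_pos
  have key : ∀ m : ℕ,
      ((∑ i, B i).card * (∏ i, (A + B i).card) ^ k' * A.card ^ (k' + 1)) ^ m
        ≤ (k' + 1) ^ (k' + 1) * ((∏ i, (A + B i).card) ^ (k' + 1) * A.card) ^ m := by
    intro m
    have hat : ∀ i : Fin (k' + 1), (A + B i).card ^ m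
        * (∏ l ∈ Finset.univ.erase i, (A + B l).card ^ m)
        = (∏ j, (A + B j).card) ^ m := by
      intro i
      calc (A + B i).card ^ m * ∏ l ∈ Finset.univ.erase i, (A + B l).card ^ m
          = ∏ l, (A + B l).card ^ m :=
            Finset.mul_prod_erase _ (fun l => (A + B l).card ^ m) (Finset.mem_univ i)
        _ = (∏ j, (A + B j).card) ^ m := Finset.prod_pow _ _ _
    have hcon := construction (k' + 1) m A hA B
      (fun i => ∏ l ∈ Finset.univ.erase i, (A + B l).card ^ m) hat
    have hT : (∏ j, (A + B j).card) ^ m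
        * (∏ j : Fin (k' + 1), ∏ l ∈ Finset.univ.erase j, (A + B l).card ^ m)
        = (∏ j, (A + B j).card) ^ (m * (k' + 1)) := by
      have h1 : ∏ j : Fin (k' + 1), ((A + B j).card ^ m
          * ∏ l ∈ Finset.univ.erase j, (A + B l).card ^ m)
          = ((∏ j, (A + B j).card) ^ m) ^ (k' + 1) := by
        rw [Finset.prod_congr rfl fun j _ => hat j]
        simp [Finset.card_univ]
      rw [Finset.prod_mul_distrib, Finset.prod_pow] at h1
      rw [h1, ← pow_mul]
    have hTeq : (∏ j : Fin (k' + 1), ∏ l ∈ Finset.univ.erase j, (A + B l).card ^ m)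
        = (∏ j, (A + B j).card) ^ (m * k') := by
      refine Nat.eq_of_mul_eq_mul_left (pow_pos hPpos m) ?_
      rw [hT, ← pow_add]
      congr 1
      ring
    rw [hTeq, mul_pow] at hcon
    exact arith_step _ _ _ _ _ _ hcon
  have hle : (∑ i, B i).card * (∏ i, (A + B i).card) ^ k' * A.card ^ (k' + 1)
      ≤ (∏ i, (A + B i).card) ^ (k' + 1) * A.card :=
    le_of_pow_le_const_mul_pow (by positivity) key
  have h2 : ((∑ i, B i).card * A.card ^ k') * ((∏ i, (A + B i).card) ^ k' * A.card)
      ≤ (∏ i, (A + B i).card) * ((∏ i, (A + B i).card) ^ k' * A.card) :=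
    calc ((∑ i, B i).card * A.card ^ k') * ((∏ i, (A + B i).card) ^ k' * A.card)
        = (∑ i, B i).card * (∏ i, (A + B i).card) ^ k' * A.card ^ (k' + 1) := by ring
      _ ≤ (∏ i, (A + B i).card) ^ (k' + 1) * A.card := hle
      _ = (∏ i, (A + B i).card) * ((∏ i, (A + B i).card) ^ k' * A.card) := by ring
  exact Nat.le_of_mul_le_mul_right h2 (by positivity)

end PRAux

theorem stmt_5 {G : Type*} [AddCommGroup G] [DecidableEq G] (k : ℕ)
    (Y : Finset G) (X : Fin k → Finset G)
    (hY : Y.Nonempty) (hX : ∀ i, (X i).Nonempty) :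
    ((∑ i, X i).card : ℝ)
      ≤ (∏ i, ((Y + X i).card : ℝ)) / (Y.card : ℝ) ^ (k - 1) := by
  obtain _ | k' := k
  · have h1 : (∑ i : Fin 0, X i) = 0 := by simp
    rw [h1, show ((0 : Finset G)) = {0} from rfl, Finset.card_singleton]
    simp
  · have hnat := PRAux.main_nat k' Y hY X hX
    have hYpos : (0 : ℝ) < (Y.card : ℝ) := by exact_mod_cast hY.card_pos
    have hpow : (0 : ℝ) < (Y.card : ℝ) ^ (k' + 1 - 1) := by positivity
    rw [le_div_iff₀ hpow]
    simp only [Nat.add_sub_cancel]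
    calc ((∑ i, X i).card : ℝ) * (Y.card : ℝ) ^ k'
        = (((∑ i, X i).card * Y.card ^ k' : ℕ) : ℝ) := by push_cast; ring
      _ ≤ ((∏ i, (Y + X i).card : ℕ) : ℝ) := by exact_mod_cast hnat
      _ = ∏ i, ((Y + X i).card : ℝ) := by push_cast; rfl
end

section
/- Let p be a prime, let Y ⊆ 𝔽_p be a finite set, and let R(Y) = {(a − b)/(c − d) : a, b, c, d ∈ Y, c ≠ d} be its ratio set of differences. Then the number of quintuples (y₁, y₂, y₁', y₂', ξ) with y₁, y₂, y₁', y₂' ∈ Y, ξ ∈ R(Y), and y₁ + ξ·y₂ = y₁' + ξ·y₂' is at most |Y|⁴ + |R(Y)|·|Y|². -/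
/-- The ratio set of differences of a set `Y ⊆ 𝔽_p`:
`R(Y) = {(a − b)/(c − d) : a, b, c, d ∈ Y, c ≠ d}`. -/
def ratioSet {p : ℕ} [Fact p.Prime] (Y : Set (ZMod p)) : Set (ZMod p) :=
  {x | ∃ a ∈ Y, ∃ b ∈ Y, ∃ c ∈ Y, ∃ d ∈ Y, c ≠ d ∧ x = (a - b) / (c - d)}

lemma ncard_sprod {α β : Type*} (s : Set α) (t : Set β) :
    (s ×ˢ t).ncard = s.ncard * t.ncard := by
  rw [← Nat.card_coe_set_eq, ← Nat.card_coe_set_eq, ← Nat.card_coe_set_eq,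
    ← Nat.card_prod]
  exact Nat.card_congr (Equiv.Set.prod s t)

theorem stmt_9 (p : ℕ) [Fact p.Prime] (Y : Set (ZMod p)) :
    {t : ZMod p × ZMod p × ZMod p × ZMod p × ZMod p |
        t.1 ∈ Y ∧ t.2.1 ∈ Y ∧ t.2.2.1 ∈ Y ∧ t.2.2.2.1 ∈ Y ∧ t.2.2.2.2 ∈ ratioSet Y ∧
        t.1 + t.2.2.2.2 * t.2.1 = t.2.2.1 + t.2.2.2.2 * t.2.2.2.1}.ncard
      ≤ Y.ncard ^ 4 + (ratioSet Y).ncard * Y.ncard ^ 2 := by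
  classical
  set T : Set (ZMod p × ZMod p × ZMod p × ZMod p × ZMod p) :=
    {t : ZMod p × ZMod p × ZMod p × ZMod p × ZMod p |
        t.1 ∈ Y ∧ t.2.1 ∈ Y ∧ t.2.2.1 ∈ Y ∧ t.2.2.2.1 ∈ Y ∧ t.2.2.2.2 ∈ ratioSet Y ∧
        t.1 + t.2.2.2.2 * t.2.1 = t.2.2.1 + t.2.2.2.2 * t.2.2.2.1} with hT
  set T1 := T ∩ {t : ZMod p × ZMod p × ZMod p × ZMod p × ZMod p | t.2.1 = t.2.2.2.1} with hT1
  set T2 := T ∩ {t : ZMod p × ZMod p × ZMod p × ZMod p × ZMod p | t.2.1 ≠ t.2.2.2.1} with hT2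
  have hsub : T ⊆ T2 ∪ T1 := by
    intro t ht
    by_cases h : t.2.1 = t.2.2.2.1
    · exact Or.inr ⟨ht, h⟩
    · exact Or.inl ⟨ht, h⟩
  have h2 : T2.ncard ≤ Y.ncard ^ 4 := by
    have : T2.ncard ≤ (Y ×ˢ Y ×ˢ Y ×ˢ Y).ncard := by
      apply Set.ncard_le_ncard_of_injOn
        (fun t => (t.1, t.2.1, t.2.2.1, t.2.2.2.1))
      · rintro ⟨y1, y2, y1', y2', ξ⟩ ⟨⟨h1, h2, h3, h4, _, _⟩, _⟩
        exact ⟨h1, h2, h3, h4⟩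
      · rintro ⟨y1, y2, y1', y2', ξ⟩ ⟨⟨_, _, _, _, _, heq⟩, hne⟩
          ⟨z1, z2, z1', z2', ζ⟩ ⟨⟨_, _, _, _, _, heq'⟩, _⟩ h
        simp only [Prod.mk.injEq] at h
        obtain ⟨e1, e2, e3, e4⟩ := h
        subst e1; subst e2; subst e3; subst e4
        simp only [ne_eq, Set.mem_setOf_eq] at hne heq heq' ⊢
        have : ξ * (y2 - y2') = ζ * (y2 - y2') := by ring_nf; linear_combination heq - heq'
        have := mul_right_cancel₀ (sub_ne_zero.2 hne) this
        simp [this]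
    calc T2.ncard ≤ (Y ×ˢ Y ×ˢ Y ×ˢ Y).ncard := this
      _ = Y.ncard ^ 4 := by rw [ncard_sprod, ncard_sprod, ncard_sprod]; ring
  have h1 : T1.ncard ≤ (ratioSet Y).ncard * Y.ncard ^ 2 := by
    have : T1.ncard ≤ (Y ×ˢ Y ×ˢ ratioSet Y).ncard := by
      apply Set.ncard_le_ncard_of_injOn
        (fun t => (t.1, t.2.1, t.2.2.2.2))
      · rintro ⟨y1, y2, y1', y2', ξ⟩ ⟨⟨h1, h2, h3, h4, h5, _⟩, _⟩
        exact ⟨h1, h2, h5⟩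
      · rintro ⟨y1, y2, y1', y2', ξ⟩ ⟨⟨_, _, _, _, _, heq⟩, he⟩
          ⟨z1, z2, z1', z2', ζ⟩ ⟨⟨_, _, _, _, _, heq'⟩, he'⟩ h
        simp only [Prod.mk.injEq] at h
        obtain ⟨e1, e2, e3⟩ := h
        subst e1; subst e2; subst e3
        simp only [Set.mem_setOf_eq] at he he' heq heq'
        subst he
        have hz : z2' = y2 := he'.symm
        subst hz
        have : y1' = z1' := by linear_combination heq' - heq
        simp [this]
    calc T1.ncard ≤ (Y ×ˢ Y ×ˢ ratioSet Y).ncard := this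
      _ = (ratioSet Y).ncard * Y.ncard ^ 2 := by rw [ncard_sprod, ncard_sprod]; ring
  calc T.ncard ≤ (T2 ∪ T1).ncard := Set.ncard_le_ncard hsub (Set.toFinite _)
    _ ≤ T2.ncard + T1.ncard := Set.ncard_union_le _ _
    _ ≤ Y.ncard ^ 4 + (ratioSet Y).ncard * Y.ncard ^ 2 := Nat.add_le_add h2 h1
end

section
/- Let p be a prime and let Y ⊆ 𝔽_p be a finite set with ratio set R(Y) = {(a − b)/(c − d) : a, b, c, d ∈ Y, c ≠ d}. If R(Y) is nonempty and |R(Y)| ≥ |Y|², then there exists ξ ∈ R(Y) such that the number of quadruples (y₁, y₂, y₁', y₂') ∈ Y⁴ with y₁ + ξ·y₂ = y₁' + ξ·y₂' is at most 2·|Y|². -/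
open Finset

namespace Finset

variable {K : Type*} [Field K] [DecidableEq K]

def dilateEnergyQuads (Y : Finset K) (ξ : K) : Finset (K × K × K × K) :=
  (Y ×ˢ Y ×ˢ Y ×ˢ Y).filter fun t => t.1 + ξ * t.2.1 = t.2.2.1 + ξ * t.2.2.2

variable (Y : Finset K)

lemma card_dilateEnergyQuads_filter_eq_le (ξ : K) :
    #((Y.dilateEnergyQuads ξ).filter fun t => t.2.1 = t.2.2.2) ≤ #Y ^ 2 := by
  have hsub : ((Y.dilateEnergyQuads ξ).filter fun t => t.2.1 = t.2.2.2) ⊆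
      (Y ×ˢ Y).image fun x => (x.1, x.2, x.1, x.2) := by
    rintro ⟨a, b, c, d⟩ ht
    simp only [dilateEnergyQuads, mem_filter, mem_product] at ht
    obtain ⟨⟨⟨ha, hb, -, -⟩, heq⟩, rfl⟩ := ht
    obtain rfl : a = c := add_right_cancel heq
    exact mem_image.mpr ⟨(a, b), mem_product.mpr ⟨ha, hb⟩, rfl⟩
  calc _ ≤ #(Y ×ˢ Y) := (card_le_card hsub).trans card_image_le
    _ = #Y ^ 2 := by rw [card_product, sq]

lemma pairwiseDisjoint_dilateEnergyQuads_filter_ne (S : Finset K) :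
    (S : Set K).PairwiseDisjoint fun ξ =>
      (Y.dilateEnergyQuads ξ).filter fun t => t.2.1 ≠ t.2.2.2 := by
  intro ξ _ ξ' _ hξ
  refine disjoint_left.mpr fun t ht ht' => hξ ?_
  simp only [dilateEnergyQuads, mem_filter] at ht ht'
  have h : ξ * (t.2.1 - t.2.2.2) = ξ' * (t.2.1 - t.2.2.2) := by
    linear_combination ht.1.2 - ht'.1.2
  exact mul_right_cancel₀ (sub_ne_zero.mpr ht.2) h

lemma sum_card_dilateEnergyQuads_le (S : Finset K) :
    ∑ ξ ∈ S, #(Y.dilateEnergyQuads ξ) ≤ #S * #Y ^ 2 + #Y ^ 4 := by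
  have hoff :
      ∑ ξ ∈ S, #((Y.dilateEnergyQuads ξ).filter fun t => t.2.1 ≠ t.2.2.2) ≤ #Y ^ 4 := by
    rw [← card_biUnion (Y.pairwiseDisjoint_dilateEnergyQuads_filter_ne S)]
    calc _ ≤ #(Y ×ˢ Y ×ˢ Y ×ˢ Y) :=
          card_le_card <| biUnion_subset.mpr fun _ _ =>
            (filter_subset _ _).trans (filter_subset _ _)
      _ = #Y ^ 4 := by simp only [card_product]; ring
  calc ∑ ξ ∈ S, #(Y.dilateEnergyQuads ξ)
      = ∑ ξ ∈ S, (#((Y.dilateEnergyQuads ξ).filter fun t => t.2.1 = t.2.2.2)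
          + #((Y.dilateEnergyQuads ξ).filter fun t => t.2.1 ≠ t.2.2.2)) :=
        sum_congr rfl fun ξ _ => (card_filter_add_card_filter_not _).symm
    _ ≤ ∑ _ξ ∈ S, #Y ^ 2 + #Y ^ 4 := by
        rw [sum_add_distrib]
        exact add_le_add (sum_le_sum fun ξ _ => Y.card_dilateEnergyQuads_filter_eq_le ξ) hoff
    _ = #S * #Y ^ 2 + #Y ^ 4 := by rw [sum_const, smul_eq_mul]

lemma exists_card_dilateEnergyQuads_le {S : Finset K} (hS : S.Nonempty) (hcard : #Y ^ 2 ≤ #S) :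
    ∃ ξ ∈ S, #(Y.dilateEnergyQuads ξ) ≤ 2 * #Y ^ 2 := by
  refine exists_le_of_sum_le hS ?_
  have h4 : #Y ^ 4 ≤ #S * #Y ^ 2 := by
    rw [show #Y ^ 4 = #Y ^ 2 * #Y ^ 2 by ring]
    exact Nat.mul_le_mul_right _ hcard
  calc ∑ ξ ∈ S, #(Y.dilateEnergyQuads ξ) ≤ #S * #Y ^ 2 + #Y ^ 4 :=
        Y.sum_card_dilateEnergyQuads_le S
    _ ≤ #S * #Y ^ 2 + #S * #Y ^ 2 := Nat.add_le_add_left h4 _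
    _ = ∑ _ξ ∈ S, 2 * #Y ^ 2 := by rw [sum_const, smul_eq_mul]; ring

end Finset

theorem stmt_10 (p : ℕ) [Fact p.Prime] (Y : Set (ZMod p))
    (hne : (ratioSet Y).Nonempty) (hbig : Y.ncard ^ 2 ≤ (ratioSet Y).ncard) :
    ∃ ξ ∈ ratioSet Y,
      {t : ZMod p × ZMod p × ZMod p × ZMod p |
          t.1 ∈ Y ∧ t.2.1 ∈ Y ∧ t.2.2.1 ∈ Y ∧ t.2.2.2 ∈ Y ∧
          t.1 + ξ * t.2.1 = t.2.2.1 + ξ * t.2.2.2}.ncard ≤ 2 * Y.ncard ^ 2 := by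
  classical
  rw [Set.ncard_eq_toFinset_card' Y] at hbig ⊢
  rw [Set.ncard_eq_toFinset_card' (ratioSet Y)] at hbig
  obtain ⟨ξ, hξ, hle⟩ :=
    Y.toFinset.exists_card_dilateEnergyQuads_le (Set.toFinset_nonempty.mpr hne) hbig
  refine ⟨ξ, Set.mem_toFinset.mp hξ, le_of_eq_of_le ?_ hle⟩
  rw [← Set.ncard_coe_finset]
  congr 1
  ext t
  simp [dilateEnergyQuads, and_assoc]
end

section
/- Let p be a prime and let P ⊆ 𝔽_p² be a finite set of points with |P| ≥ 2. Let L(P) be the set of lines determined by pairs of distinct points of P. Then the number of ordered triples (q₁, q₂, q₃) of pairwise distinct collinear points of P is at least (|P|·(|P|−1))^(3/2) / (2√2 · |L(P)|^(1/2)) − |P|·(|P|−1). -/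
/-!
Sort the ordered pairs and the ordered triples of distinct collinear points of `P` by the line
they span. If the lines of `L(P)` carry `m_ℓ ≥ 2` points, then `N := |P|(|P|-1) = ∑ m_ℓ(m_ℓ-1)`
and the number `T` of collinear triples is `∑ m_ℓ(m_ℓ-1)(m_ℓ-2)`, so that
`T + N = ∑ m_ℓ(m_ℓ-1)²`. Cauchy–Schwarz twice gives `N² ≤ (T + N) ∑ m_ℓ` and
`(∑ m_ℓ)² ≤ |L(P)| ∑ m_ℓ² ≤ 2 |L(P)| N`, hence `N³ ≤ 2 |L(P)| (T + N)²`; take square roots.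
-/

def IsAffLine {p : ℕ} (s : Set (ZMod p × ZMod p)) : Prop :=
  ∃ a b c : ZMod p, (a, b) ≠ (0, 0) ∧ s = {v : ZMod p × ZMod p | a * v.1 + b * v.2 = c}

def linesOf {p : ℕ} (P : Set (ZMod p × ZMod p)) : Set (Set (ZMod p × ZMod p)) :=
  {s | IsAffLine s ∧ ∃ q₁ ∈ P, ∃ q₂ ∈ P, q₁ ≠ q₂ ∧ q₁ ∈ s ∧ q₂ ∈ s}

open Finset

section Counting

variable {α : Type*}

lemma cast_card_offDiag (s : Finset α) : (#s.offDiag : ℝ) = #s * (#s - 1) := by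
  rw [offDiag_card, Nat.cast_sub (Nat.le_mul_self _)]
  push_cast
  ring

variable [DecidableEq α]

def distinctTriples (s : Finset α) : Finset (α × α × α) :=
  (s ×ˢ s ×ˢ s).filter fun t => t.1 ≠ t.2.1 ∧ t.1 ≠ t.2.2 ∧ t.2.1 ≠ t.2.2

lemma card_distinctTriples (s : Finset α) :
    #(distinctTriples s) = ∑ a ∈ s, #(s.erase a).offDiag := by
  rw [← card_sigma]
  refine card_nbij' (fun t => ⟨t.1, t.2⟩) (fun x => (x.1, x.2)) ?_ ?_ (fun _ _ => rfl)
    (fun _ _ => rfl)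
  · intro t ht
    simp only [distinctTriples, coe_filter, mem_product, Set.mem_ofPred_eq] at ht
    simp only [coe_sigma, Set.mem_sigma_iff, mem_coe, mem_offDiag, mem_erase]
    tauto
  · intro x hx
    simp only [coe_sigma, Set.mem_sigma_iff, mem_coe, mem_offDiag, mem_erase] at hx
    simp only [distinctTriples, coe_filter, mem_product, Set.mem_ofPred_eq]
    tauto

lemma cast_card_distinctTriples (s : Finset α) :
    (#(distinctTriples s) : ℝ) = #s * (#s - 1) * (#s - 2) := by
  have herase : ∀ a ∈ s, (#(s.erase a).offDiag : ℝ) = (#s - 1) * (#s - 2) := by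
    intro a ha
    rw [cast_card_offDiag, card_erase_of_mem ha, Nat.cast_pred (card_pos.mpr ⟨a, ha⟩)]
    ring
  rw [card_distinctTriples, Nat.cast_sum, sum_congr rfl herase, sum_const, nsmul_eq_mul]
  ring

end Counting

lemma pow_three_le_two_mul_card_mul_sq {ι : Type*} (S : Finset ι) (m : ι → ℝ)
    (hm : ∀ i ∈ S, 2 ≤ m i) :
    (∑ i ∈ S, m i * (m i - 1)) ^ 3 ≤ 2 * #S * (∑ i ∈ S, m i * (m i - 1) ^ 2) ^ 2 := by
  set N := ∑ i ∈ S, m i * (m i - 1)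
  set A := ∑ i ∈ S, m i * (m i - 1) ^ 2
  set M := ∑ i ∈ S, m i
  have hN : 0 ≤ N := sum_nonneg fun i hi => by nlinarith [hm i hi]
  have hNA : N ^ 2 ≤ A * M :=
    sum_sq_le_sum_mul_sum_of_sq_le_mul S (fun i hi => by nlinarith [hm i hi])
      (fun i hi => by linarith [hm i hi]) fun i _ => le_of_eq (by ring)
  have hM : M ^ 2 ≤ 2 * #S * N := by
    have hsq : ∑ i ∈ S, m i ^ 2 ≤ 2 * N := by
      rw [mul_sum]
      exact sum_le_sum fun i hi => by nlinarith [hm i hi]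
    nlinarith [sq_sum_le_card_mul_sum_sq (s := S) (f := m), Nat.cast_nonneg (α := ℝ) #S]
  rcases hN.eq_or_lt with hN0 | hNpos
  · calc N ^ 3 = 0 := by rw [← hN0]; ring
      _ ≤ _ := by positivity
  have : N ^ 3 * N ≤ 2 * #S * A ^ 2 * N := by
    calc N ^ 3 * N = (N ^ 2) ^ 2 := by ring
      _ ≤ (A * M) ^ 2 := pow_le_pow_left₀ (sq_nonneg N) hNA 2
      _ = M ^ 2 * A ^ 2 := by ring
      _ ≤ 2 * #S * N * A ^ 2 := mul_le_mul_of_nonneg_right hM (sq_nonneg A)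
      _ = 2 * #S * A ^ 2 * N := by ring
  exact le_of_mul_le_mul_right this hNpos

lemma rpow_three_halves_div_sub_le {N L T : ℝ} (hN : 0 ≤ N) (hL : 0 ≤ L) (hT : 0 ≤ T)
    (h : N ^ 3 ≤ 2 * L * (T + N) ^ 2) :
    N ^ ((3 : ℝ) / 2) / (2 * √2 * L ^ ((1 : ℝ) / 2)) - N ≤ T := by
  have hsqrt : N ^ ((3 : ℝ) / 2) ≤ √2 * √L * (T + N) := by
    calc N ^ ((3 : ℝ) / 2) = √(N ^ 3) := by
          rw [Real.sqrt_eq_rpow, ← Real.rpow_natCast, ← Real.rpow_mul hN]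
          norm_num
      _ ≤ √(2 * L * (T + N) ^ 2) := Real.sqrt_le_sqrt h
      _ = √2 * √L * (T + N) := by
          rw [Real.sqrt_mul (by positivity), Real.sqrt_mul zero_le_two,
            Real.sqrt_sq (by linarith)]
  have hdiv : N ^ ((3 : ℝ) / 2) / (2 * √2 * L ^ ((1 : ℝ) / 2)) ≤ (T + N) / 2 := by
    refine div_le_of_le_mul₀ (by positivity) (by linarith) ?_
    rw [← Real.sqrt_eq_rpow]
    linarith
  linarith

section Lines

variable {p : ℕ}

def lineThrough (q r : ZMod p × ZMod p) : Set (ZMod p × ZMod p) :=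
  {v | (v.1 - q.1) * (r.2 - q.2) = (v.2 - q.2) * (r.1 - q.1)}

lemma left_mem_lineThrough (q r : ZMod p × ZMod p) : q ∈ lineThrough q r := by
  simp [lineThrough]

lemma right_mem_lineThrough (q r : ZMod p × ZMod p) : r ∈ lineThrough q r := by
  simp only [lineThrough, Set.mem_ofPred_eq]
  ring

lemma isAffLine_lineThrough {q r : ZMod p × ZMod p} (h : q ≠ r) :
    IsAffLine (lineThrough q r) := by
  refine ⟨r.2 - q.2, q.1 - r.1, (r.2 - q.2) * q.1 + (q.1 - r.1) * q.2, ?_, ?_⟩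
  · intro hc
    simp only [Prod.mk.injEq, sub_eq_zero] at hc
    exact h (Prod.ext hc.2 hc.1.symm)
  · ext v
    simp only [lineThrough, Set.mem_ofPred_eq]
    constructor <;> intro h' <;> linear_combination h'

variable [Fact p.Prime]

lemma IsAffLine.eq_lineThrough {s : Set (ZMod p × ZMod p)} (hs : IsAffLine s)
    {q r : ZMod p × ZMod p} (hq : q ∈ s) (hr : r ∈ s) (hqr : q ≠ r) : s = lineThrough q r := by
  obtain ⟨a, b, c, hab, rfl⟩ := hs
  simp only [Set.mem_ofPred_eq] at hq hr
  -- `(a, b)` is orthogonal to the nonzero direction `r - q`, so the two equations are proportional.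
  have hd : a * (r.1 - q.1) + b * (r.2 - q.2) = 0 := by linear_combination hr - hq
  ext v
  simp only [Set.mem_ofPred_eq, lineThrough]
  constructor
  · intro hv
    have hab' : a ≠ 0 ∨ b ≠ 0 := by
      by_contra! h
      exact hab (by simp [h.1, h.2])
    rw [← sub_eq_zero]
    rcases hab' with ha | hb
    · refine (mul_eq_zero.mp ?_).resolve_left ha
      linear_combination (r.2 - q.2) * hv - (r.2 - q.2) * hq - (v.2 - q.2) * hd
    · refine (mul_eq_zero.mp ?_).resolve_left hb
      linear_combination (v.1 - q.1) * hd - (r.1 - q.1) * hv + (r.1 - q.1) * hq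
  · intro hv
    have hrq : r.1 - q.1 ≠ 0 ∨ r.2 - q.2 ≠ 0 := by
      by_contra! h
      exact hqr (Prod.ext (sub_eq_zero.mp h.1) (sub_eq_zero.mp h.2)).symm
    rw [← sub_eq_zero]
    rcases hrq with h1 | h2
    · refine (mul_eq_zero.mp ?_).resolve_right h1
      linear_combination (v.1 - q.1) * hd - b * hv + (r.1 - q.1) * hq
    · refine (mul_eq_zero.mp ?_).resolve_right h2
      linear_combination (v.2 - q.2) * hd + a * hv + (r.2 - q.2) * hq

lemma exists_isAffLine_mem_iff {q r v : ZMod p × ZMod p} (hqr : q ≠ r) :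
    (∃ s, IsAffLine s ∧ q ∈ s ∧ r ∈ s ∧ v ∈ s) ↔ v ∈ lineThrough q r := by
  refine ⟨?_, fun hv => ⟨_, isAffLine_lineThrough hqr, left_mem_lineThrough q r,
    right_mem_lineThrough q r, hv⟩⟩
  rintro ⟨s, hs, hq, hr, hv⟩
  rwa [← hs.eq_lineThrough hq hr hqr]

lemma linesOf_eq_image (P : Set (ZMod p × ZMod p)) :
    linesOf P = (fun x => lineThrough x.1 x.2) '' P.offDiag := by
  ext s
  constructor
  · rintro ⟨hs, q, hq, r, hr, hqr, hqs, hrs⟩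
    exact ⟨(q, r), ⟨hq, hr, hqr⟩, (hs.eq_lineThrough hqs hrs hqr).symm⟩
  · rintro ⟨⟨q, r⟩, ⟨hq, hr, hqr⟩, rfl⟩
    exact ⟨isAffLine_lineThrough hqr, q, hq, r, hr, hqr, left_mem_lineThrough q r,
      right_mem_lineThrough q r⟩

end Lines

section Incidences

open Classical

variable {p : ℕ} (P : Finset (ZMod p × ZMod p))

noncomputable def linesFinset : Finset (Set (ZMod p × ZMod p)) :=
  P.offDiag.image fun x => lineThrough x.1 x.2

noncomputable def collinearTriples :
    Finset ((ZMod p × ZMod p) × (ZMod p × ZMod p) × (ZMod p × ZMod p)) :=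
  (distinctTriples P).filter fun t => t.2.2 ∈ lineThrough t.1 t.2.1

variable {P}

lemma isAffLine_of_mem_linesFinset {ℓ : Set (ZMod p × ZMod p)} (hℓ : ℓ ∈ linesFinset P) :
    IsAffLine ℓ := by
  obtain ⟨⟨q, r⟩, hqr, rfl⟩ := mem_image.mp hℓ
  exact isAffLine_lineThrough (mem_offDiag.mp hqr).2.2

lemma two_le_card_filter_mem {ℓ : Set (ZMod p × ZMod p)} (hℓ : ℓ ∈ linesFinset P) :
    2 ≤ #(P.filter (· ∈ ℓ)) := by
  obtain ⟨⟨q, r⟩, hqr, rfl⟩ := mem_image.mp hℓ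
  obtain ⟨hq, hr, hne⟩ := mem_offDiag.mp hqr
  exact one_lt_card.mpr ⟨q, mem_filter.mpr ⟨hq, left_mem_lineThrough q r⟩,
    r, mem_filter.mpr ⟨hr, right_mem_lineThrough q r⟩, hne⟩

variable (P) [Fact p.Prime]

lemma ncard_linesOf : (linesOf (P : Set (ZMod p × ZMod p))).ncard = #(linesFinset P) := by
  rw [linesOf_eq_image, ← coe_offDiag, ← coe_image, Set.ncard_coe_finset, linesFinset]

lemma card_offDiag_eq_sum_lines :
    #P.offDiag = ∑ ℓ ∈ linesFinset P, #(P.filter (· ∈ ℓ)).offDiag := by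
  rw [card_eq_sum_card_fiberwise (t := linesFinset P) fun x hx => mem_image_of_mem _ hx]
  refine sum_congr rfl fun ℓ hℓ => congrArg card ?_
  ext ⟨q, r⟩
  simp only [mem_filter, mem_offDiag]
  constructor
  · rintro ⟨⟨hq, hr, hne⟩, rfl⟩
    exact ⟨⟨hq, left_mem_lineThrough q r⟩, ⟨hr, right_mem_lineThrough q r⟩, hne⟩
  · rintro ⟨⟨hq, hqℓ⟩, ⟨hr, hrℓ⟩, hne⟩
    exact ⟨⟨hq, hr, hne⟩, ((isAffLine_of_mem_linesFinset hℓ).eq_lineThrough hqℓ hrℓ hne).symm⟩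

lemma coe_collinearTriples :
    (collinearTriples P : Set ((ZMod p × ZMod p) × (ZMod p × ZMod p) × (ZMod p × ZMod p))) =
      {t | t.1 ∈ P ∧ t.2.1 ∈ P ∧ t.2.2 ∈ P ∧ t.1 ≠ t.2.1 ∧ t.1 ≠ t.2.2 ∧ t.2.1 ≠ t.2.2 ∧
        ∃ s, IsAffLine s ∧ t.1 ∈ s ∧ t.2.1 ∈ s ∧ t.2.2 ∈ s} := by
  ext ⟨q, r, v⟩
  simp only [collinearTriples, distinctTriples, coe_filter, mem_filter, mem_product,
    Set.mem_ofPred_eq]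
  constructor
  · rintro ⟨⟨⟨hq, hr, hv⟩, hqr, hqv, hrv⟩, hvl⟩
    exact ⟨hq, hr, hv, hqr, hqv, hrv, (exists_isAffLine_mem_iff hqr).mpr hvl⟩
  · rintro ⟨hq, hr, hv, hqr, hqv, hrv, hcol⟩
    exact ⟨⟨⟨hq, hr, hv⟩, hqr, hqv, hrv⟩, (exists_isAffLine_mem_iff hqr).mp hcol⟩

lemma card_collinearTriples_eq_sum_lines :
    #(collinearTriples P) = ∑ ℓ ∈ linesFinset P, #(distinctTriples (P.filter (· ∈ ℓ))) := by
  rw [card_eq_sum_card_fiberwise (f := fun t => lineThrough t.1 t.2.1) (t := linesFinset P)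
    fun t ht => by
      simp only [collinearTriples, distinctTriples, coe_filter, mem_filter, mem_product,
        Set.mem_ofPred_eq] at ht
      exact mem_image.mpr ⟨(t.1, t.2.1), mem_offDiag.mpr ⟨ht.1.1.1, ht.1.1.2.1, ht.1.2.1⟩, rfl⟩]
  refine sum_congr rfl fun ℓ hℓ => congrArg card ?_
  ext ⟨q, r, v⟩
  simp only [collinearTriples, distinctTriples, mem_filter, mem_product]
  constructor
  · rintro ⟨⟨⟨⟨hq, hr, hv⟩, hne⟩, hvℓ⟩, rfl⟩
    exact ⟨⟨⟨hq, left_mem_lineThrough q r⟩, ⟨hr, right_mem_lineThrough q r⟩, ⟨hv, hvℓ⟩⟩, hne⟩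
  · rintro ⟨⟨⟨hq, hqℓ⟩, ⟨hr, hrℓ⟩, ⟨hv, hvℓ⟩⟩, hne⟩
    have hℓq := (isAffLine_of_mem_linesFinset hℓ).eq_lineThrough hqℓ hrℓ hne.1
    exact ⟨⟨⟨⟨hq, hr, hv⟩, hne⟩, hℓq ▸ hvℓ⟩, hℓq.symm⟩

end Incidences

theorem stmt_11_general (p : ℕ) (hp : p.Prime) (P : Finset (ZMod p × ZMod p)) :
    ((P.card : ℝ) * ((P.card : ℝ) - 1)) ^ ((3 : ℝ) / 2) /
        (2 * Real.sqrt 2 * (((linesOf (↑P : Set (ZMod p × ZMod p))).ncard : ℝ)) ^ ((1 : ℝ) / 2))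
      - (P.card : ℝ) * ((P.card : ℝ) - 1)
    ≤ (({t : (ZMod p × ZMod p) × (ZMod p × ZMod p) × (ZMod p × ZMod p) |
          t.1 ∈ P ∧ t.2.1 ∈ P ∧ t.2.2 ∈ P ∧
          t.1 ≠ t.2.1 ∧ t.1 ≠ t.2.2 ∧ t.2.1 ≠ t.2.2 ∧
          ∃ s, IsAffLine s ∧ t.1 ∈ s ∧ t.2.1 ∈ s ∧ t.2.2 ∈ s}.ncard : ℝ)) := by
  classical
  have := Fact.mk hp
  set m : Set (ZMod p × ZMod p) → ℝ := fun ℓ => #(P.filter (· ∈ ℓ))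
  have hpairs : (#P : ℝ) * (#P - 1) = ∑ ℓ ∈ linesFinset P, m ℓ * (m ℓ - 1) := by
    rw [← cast_card_offDiag, card_offDiag_eq_sum_lines, Nat.cast_sum]
    exact sum_congr rfl fun ℓ _ => cast_card_offDiag _
  have htriples : (#(collinearTriples P) : ℝ) + #P * (#P - 1) =
      ∑ ℓ ∈ linesFinset P, m ℓ * (m ℓ - 1) ^ 2 := by
    rw [card_collinearTriples_eq_sum_lines, Nat.cast_sum, hpairs, ← sum_add_distrib]
    refine sum_congr rfl fun ℓ _ => ?_
    rw [cast_card_distinctTriples]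
    ring
  have key := pow_three_le_two_mul_card_mul_sq (linesFinset P) m fun ℓ hℓ => by
    simp only [m]
    exact_mod_cast two_le_card_filter_mem hℓ
  rw [← coe_collinearTriples, Set.ncard_coe_finset, ncard_linesOf]
  refine rpow_three_halves_div_sub_le (by rw [← cast_card_offDiag]; positivity) (by positivity)
    (by positivity) ?_
  rwa [htriples, hpairs]

theorem stmt_11 (p : ℕ) (hp : p.Prime) (P : Finset (ZMod p × ZMod p)) (hP : 2 ≤ P.card) :
    ((P.card : ℝ) * ((P.card : ℝ) - 1)) ^ ((3 : ℝ) / 2) /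
        (2 * Real.sqrt 2 * (((linesOf (↑P : Set (ZMod p × ZMod p))).ncard : ℝ)) ^ ((1 : ℝ) / 2))
      - (P.card : ℝ) * ((P.card : ℝ) - 1)
    ≤ (({t : (ZMod p × ZMod p) × (ZMod p × ZMod p) × (ZMod p × ZMod p) |
          t.1 ∈ P ∧ t.2.1 ∈ P ∧ t.2.2 ∈ P ∧
          t.1 ≠ t.2.1 ∧ t.1 ≠ t.2.2 ∧ t.2.1 ≠ t.2.2 ∧
          ∃ s, IsAffLine s ∧ t.1 ∈ s ∧ t.2.1 ∈ s ∧ t.2.2 ∈ s}.ncard : ℝ)) :=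
  stmt_11_general p hp P
end

section
/- Let p be a prime, and let X, Y ⊆ 𝔽_p be finite nonempty sets. Let K = max_{y ∈ Y} |X + y·X|. Then there exist elements x̃₁, x̃₂ ∈ X such that the number of triples (x₁, x₂, y) ∈ X × X × Y satisfying x₂ − x̃₂ = y·(x₁ − x̃₁) is at least |Y|·|X|² / K. -/
/-!
For each `y`, the map `(a, b) ↦ a + y * b` sends `X × X` into `X + y • X`, so by Cauchy–Schwarz it
has at least `|X|⁴ / K` collisions `x₂ + y * x̃₁ = x̃₂ + y * x₁`. Read as
`x₂ - x̃₂ = y * (x₁ - x̃₁)`, these are incidences of the points `(x₁, x₂)` with the lines of slope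
`y` through `(x̃₁, x̃₂)`; summing over `y ∈ Y` and averaging over the `|X|²` base points gives one
base point with at least `|Y| |X|² / K` incidences.
-/

open Pointwise Finset

theorem card_sq_le_card_mul_card_filter_eq {α β : Type*} [DecidableEq β] {s : Finset α}
    {t : Finset β} {f : α → β} (hf : (s : Set α).MapsTo f t) :
    #s ^ 2 ≤ #t * #{q ∈ s ×ˢ s | f q.1 = f q.2} := by
  have hcollisions : #{q ∈ s ×ˢ s | f q.1 = f q.2} = ∑ c ∈ t, #{a ∈ s | f a = c} ^ 2 := by
    rw [card_eq_sum_card_fiberwise (f := fun q => f q.1) fun q hq =>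
      hf (mem_product.1 (mem_filter.1 hq).1).1]
    refine sum_congr rfl fun c _ => ?_
    rw [sq, ← card_product, filter_filter]
    congr 1
    ext ⟨a, b⟩
    simp only [mem_filter, mem_product]
    grind
  calc #s ^ 2 = (∑ c ∈ t, #{a ∈ s | f a = c}) ^ 2 := by rw [← card_eq_sum_card_fiberwise hf]
    _ ≤ #t * ∑ c ∈ t, #{a ∈ s | f a = c} ^ 2 := sq_sum_le_card_mul_sum_sq
    _ = #t * #{q ∈ s ×ˢ s | f q.1 = f q.2} := by rw [hcollisions]

section CommRing

variable {R : Type*} [CommRing R]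

theorem sub_eq_mul_sub_iff_add_mul_eq_add_mul {b b' y a a' : R} :
    b - b' = y * (a - a') ↔ b + y * a' = b' + y * a := by
  constructor <;> intro h <;> linear_combination h

variable [DecidableEq R]

/-- This is `addEnergy X (y • X)` when `y` is a unit; for a zero divisor `y` it still counts the
pairs `(a, b)` with multiplicity rather than the elements of `y • X`. -/
def dilateAddEnergy (X : Finset R) (y : R) : ℕ :=
  #{q ∈ (X ×ˢ X) ×ˢ (X ×ˢ X) | q.1.1 + y * q.1.2 = q.2.1 + y * q.2.2}

theorem card_pow_four_le_card_add_smul_mul_dilateAddEnergy (X : Finset R) (y : R) :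
    #X ^ 4 ≤ #(X + y • X) * dilateAddEnergy X y := by
  have hmaps : ((X ×ˢ X : Finset (R × R)) : Set (R × R)).MapsTo (fun a => a.1 + y * a.2)
      ((X + y • X : Finset R) : Set R) := fun a ha => by
    simpa only [mem_coe, smul_eq_mul] using
      add_mem_add (mem_product.1 ha).1 (smul_mem_smul_finset (a := y) (mem_product.1 ha).2)
  calc #X ^ 4 = #(X ×ˢ X) ^ 2 := by rw [card_product]; ring
    _ ≤ _ := card_sq_le_card_mul_card_filter_eq hmaps

theorem sum_card_incidences_eq_sum_dilateAddEnergy (X Y : Finset R) :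
    ∑ xt ∈ X ×ˢ X, #{t ∈ X ×ˢ X ×ˢ Y | t.2.1 - xt.2 = t.2.2 * (t.1 - xt.1)} =
      ∑ y ∈ Y, dilateAddEnergy X y := by
  simp only [dilateAddEnergy, card_filter]
  rw [← sum_product', ← sum_product']
  refine sum_nbij' (fun p => (p.2.2.2, (p.2.2.1, p.1.1), (p.1.2, p.2.1)))
    (fun p => ((p.2.1.2, p.2.2.1), (p.2.2.2, p.2.1.1, p.1)))
    (by simp +contextual) (by simp +contextual) (fun _ _ => rfl) (fun _ _ => rfl) ?_
  rintro ⟨⟨a, a'⟩, b, b', y⟩ -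
  simp only [sub_eq_mul_sub_iff_add_mul_eq_add_mul]

theorem exists_card_incidences_ge_of_card_add_smul_le {X Y : Finset R} (hX : X.Nonempty)
    {K : ℝ} (hK0 : 0 < K) (hK : ∀ y ∈ Y, (#(X + y • X) : ℝ) ≤ K) :
    ∃ xt₁ ∈ X, ∃ xt₂ ∈ X, (#Y : ℝ) * #X ^ 2 / K ≤
      #{t ∈ X ×ˢ X ×ˢ Y | t.2.1 - xt₂ = t.2.2 * (t.1 - xt₁)} := by
  have henergy : ∀ y ∈ Y, (#X : ℝ) ^ 4 / K ≤ dilateAddEnergy X y := fun y hy => by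
    rw [div_le_iff₀ hK0]
    calc (#X : ℝ) ^ 4 ≤ #(X + y • X) * dilateAddEnergy X y :=
          mod_cast card_pow_four_le_card_add_smul_mul_dilateAddEnergy X y
      _ ≤ dilateAddEnergy X y * K := by rw [mul_comm]; gcongr; exact hK y hy
  have hsum : ∑ _ ∈ X ×ˢ X, (#Y : ℝ) * #X ^ 2 / K ≤ ∑ xt ∈ X ×ˢ X,
      (#{t ∈ X ×ˢ X ×ˢ Y | t.2.1 - xt.2 = t.2.2 * (t.1 - xt.1)} : ℝ) :=
    calc ∑ _ ∈ X ×ˢ X, (#Y : ℝ) * #X ^ 2 / K = ∑ _ ∈ Y, (#X : ℝ) ^ 4 / K := by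
          simp only [sum_const, card_product, nsmul_eq_mul, Nat.cast_mul]; ring
      _ ≤ ∑ y ∈ Y, (dilateAddEnergy X y : ℝ) := sum_le_sum henergy
      _ = _ := mod_cast (sum_card_incidences_eq_sum_dilateAddEnergy X Y).symm
  obtain ⟨xt, hxt, hle⟩ := exists_le_of_sum_le (hX.product hX) hsum
  exact ⟨xt.1, (mem_product.1 hxt).1, xt.2, (mem_product.1 hxt).2, hle⟩

end CommRing

theorem stmt_13_general (p : ℕ) (X Y : Finset (ZMod p))
    (hX : X.Nonempty) (hY : Y.Nonempty) :
    ∃ xt₁ ∈ X, ∃ xt₂ ∈ X,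
      (Y.card : ℝ) * (X.card : ℝ) ^ 2 /
          ((Y.sup' hY fun y => (X + y • X).card : ℝ))
        ≤ ((((X ×ˢ X ×ˢ Y).filter fun t : ZMod p × ZMod p × ZMod p =>
            t.2.1 - xt₂ = t.2.2 * (t.1 - xt₁)).card : ℝ)) := by
  have hK : ∀ y ∈ Y, ((X + y • X).card : ℝ) ≤ Y.sup' hY fun y => ((X + y • X).card : ℝ) :=
    fun y hy => le_sup' (fun y => ((X + y • X).card : ℝ)) hy
  obtain ⟨y, hy⟩ := hY
  have hK0 : (0 : ℝ) < Y.sup' ⟨y, hy⟩ fun y => ((X + y • X).card : ℝ) :=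
    lt_of_lt_of_le (mod_cast (hX.add hX.smul_finset).card_pos) (hK y hy)
  exact exists_card_incidences_ge_of_card_add_smul_le hX hK0 hK

theorem stmt_13 (p : ℕ) (hp : p.Prime) (X Y : Finset (ZMod p))
    (hX : X.Nonempty) (hY : Y.Nonempty) :
    ∃ xt₁ ∈ X, ∃ xt₂ ∈ X,
      (Y.card : ℝ) * (X.card : ℝ) ^ 2 /
          ((Y.sup' hY fun y => (X + y • X).card : ℝ))
        ≤ ((((X ×ˢ X ×ˢ Y).filter fun t : ZMod p × ZMod p × ZMod p =>
            t.2.1 - xt₂ = t.2.2 * (t.1 - xt₁)).card : ℝ)) :=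
  stmt_13_general p X Y hX hY
end
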